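/- Consider a minimal LTI system M = (r, n, m, A, B, C, σ_w² I, σ_η² I) under Assumption 1, and let d be a positive integer. Let H_d⁻(M) be the dn×dm block Hankel matrix with (i,j) block C A^{i+j} B for 0 ≤ i, j ≤ d−1, and φ_𝓗 = σ_min(H_d⁻(M)). Let Φ̂_C be an orthonormal matrix such that ‖(Φ̂_C^⊥)ᵀ Φ_C‖ ≤ Δ_Φ. If Δ_Φ ≤ φ_𝓗 (1 − ρ_A²) / (8 ψ_A² ψ_B ψ_C), then σ_min( diag(Φ̂_Cᵀ, …, Φ̂_Cᵀ) · H_d⁻(M) ) ≥ φ_𝓗 / 2, where diag(Φ̂_Cᵀ, …, Φ̂_Cᵀ) is the block-diagonal matrix with d copies of Φ̂_Cᵀ. -/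

import Mathlib

open MeasureTheory ProbabilityTheory Matrix Finset Real

noncomputable section

/-- The entries of a finite family of reals, sorted in descending order and
indexed by `ℕ` (`0`-indexed), padded with `0`. -/
def sortedDesc {n : Type*} [Fintype n] (f : n → ℝ) : ℕ → ℝ := fun i =>
  let g : Fin (Fintype.card n) → ℝ := f ∘ (Fintype.equivFin n).symm
  if h : i < Fintype.card n then
    (g ∘ Tuple.sort g) ⟨Fintype.card n - 1 - i, by omega⟩
  else 0

/-- `sval M i` is the `i`-th largest singular value of a real matrix `M` (`1`-indexed). -/
def sval {m n : Type*} [Fintype m] [Fintype n] [DecidableEq n]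
    (M : Matrix m n ℝ) (i : ℕ) : ℝ :=
  Real.sqrt (sortedDesc (Matrix.isHermitian_conjTranspose_mul_self M).eigenvalues (i - 1))

/-- The minimum nonzero singular value of a matrix. -/
def svalMin {m n : Type*} [Fintype m] [Fintype n] [DecidableEq n]
    (M : Matrix m n ℝ) : ℝ :=
  sval M M.rank

/-- The spectral norm (ℓ²-operator norm) of a real matrix. -/
def spec {m n : Type*} [Fintype m] [Fintype n] [DecidableEq n] (M : Matrix m n ℝ) : ℝ :=
  ‖LinearMap.toContinuousLinearMap (Matrix.toEuclideanLin M)‖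

/-- The positive semidefinite square root of a positive semidefinite matrix (the definition
`Matrix.PosSemidef.sqrt` of the older Mathlib, since removed). -/
def Matrix.PosSemidef.sqrt {n : Type*} [Fintype n] [DecidableEq n]
    {A : Matrix n n ℝ} (hA : A.PosSemidef) : Matrix n n ℝ :=
  hA.1.eigenvectorUnitary.1 * diagonal ((√·) ∘ hA.1.eigenvalues) *
    (star hA.1.eigenvectorUnitary : Matrix n n ℝ)

/-- The standard Gaussian measure on `n → ℝ`. -/
def stdGaussianPi (n : Type*) [Fintype n] : Measure (n → ℝ) :=
  Measure.pi fun _ => gaussianReal 0 1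

/-- The centered Gaussian measure `N(0, S)` on `n → ℝ`, i.e. the law of `S^{1/2} x` for a
standard Gaussian `x` (junk value if `S` is not positive semi-definite). -/
def gaussianVec {n : Type*} [Fintype n] [DecidableEq n] (S : Matrix n n ℝ) :
    Measure (n → ℝ) :=
  by classical exact
    if h : S.PosSemidef then (stdGaussianPi n).map (fun x => h.sqrt.mulVec x) else 0

/-- The inverse square root `M^{-1/2}` of a positive semi-definite matrix (junk value `0`
otherwise). -/
def invSqrt {n : Type*} [Fintype n] [DecidableEq n] (M : Matrix n n ℝ) : Matrix n n ℝ :=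
  by classical exact if h : M.PosSemidef then h.sqrt⁻¹ else 0

/-- Zero-padding of a finite-dimensional vector into `ℕ → ℝ`, used to encode mutual
independence of families of random vectors of different dimensions via a common codomain. -/
def padFn {d : ℕ} (v : Fin d → ℝ) : ℕ → ℝ := fun i => if h : i < d then v ⟨i, h⟩ else 0

/-- The controllability matrix `[B, AB, …, A^{r-1}B]` of a linear system. -/
def ctrbMat {r m : ℕ} (A : Matrix (Fin r) (Fin r) ℝ) (B : Matrix (Fin r) (Fin m) ℝ) :
    Matrix (Fin r) (Fin m × Fin r) ℝ :=
  Matrix.of fun i p => (A ^ (p.2 : ℕ) * B) i p.1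

/-- The observability matrix `[C; CA; …; CA^{r-1}]` of a linear system. -/
def obsvMat {r n : ℕ} (A : Matrix (Fin r) (Fin r) ℝ) (C : Matrix (Fin n) (Fin r) ℝ) :
    Matrix (Fin n × Fin r) (Fin r) ℝ :=
  Matrix.of fun p j => (C * A ^ (p.2 : ℕ)) p.1 j

/-- `P` is the orthogonal projection onto the span of eigenvectors of `M` corresponding to
its `k` largest eigenvalues (i.e. onto the "first `k` eigenvectors" of `M`). -/
def IsTopEigenProj {n : Type*} [Fintype n] [DecidableEq n]
    (M : Matrix n n ℝ) (k : ℕ) (P : Matrix n n ℝ) : Prop :=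
  ∃ (v : n → (n → ℝ)) (lam : n → ℝ) (e : n ≃ Fin (Fintype.card n)),
    (∀ i j, v i ⬝ᵥ v j = if i = j then 1 else 0) ∧
    (∀ i, M.mulVec (v i) = lam i • v i) ∧
    (∀ i j, e i ≤ e j → lam j ≤ lam i) ∧
    P = ∑ i ∈ Finset.univ.filter (fun i => (e i : ℕ) < k), vecMulVec (v i) (v i)

/-- The estimated order in the Col-Approx algorithm: the largest index `i ≥ 1` such that the
`i`-th spectral gap of `M` exceeds the threshold `τ`. -/
def gapRank {n : Type*} [Fintype n] [DecidableEq n] (M : Matrix n n ℝ) (τ : ℝ) : ℕ :=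
  sSup {i : ℕ | 1 ≤ i ∧ sval M i - sval M (i + 1) > τ}

end

noncomputable section

/-- The block Hankel matrix `H_d⁻(M) ∈ ℝ^{dn×dm}` with `(i,j)` block `C A^{i+j} B`,
`0 ≤ i, j ≤ d−1` (block indices are the second components). -/
def hankelMinus {r n m : ℕ} (A : Matrix (Fin r) (Fin r) ℝ) (B : Matrix (Fin r) (Fin m) ℝ)
    (C : Matrix (Fin n) (Fin r) ℝ) (d : ℕ) :
    Matrix (Fin n × Fin d) (Fin m × Fin d) ℝ :=
  Matrix.of fun p q => (C * A ^ ((p.2 : ℕ) + (q.2 : ℕ)) * B) p.1 q.1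

end

set_option linter.unusedSectionVars false
set_option linter.unusedVariables false

noncomputable section SpecTools
open scoped Matrix.Norms.L2Operator

variable {ι κ τ : Type*} [Fintype ι] [DecidableEq ι] [Fintype κ] [Fintype τ] [DecidableEq τ]

lemma spec_eq_norm (M : Matrix κ ι ℝ) : spec M = ‖M‖ := rfl

lemma spec_nonneg (M : Matrix κ ι ℝ) : 0 ≤ spec M := by
  rw [spec_eq_norm]; exact norm_nonneg _

lemma spec_mul_le (M : Matrix κ ι ℝ) (N : Matrix ι τ ℝ) : spec (M * N) ≤ spec M * spec N := by
  simpa only [spec_eq_norm] using Matrix.l2_opNorm_mul M N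

/-- Euclidean norm of a plain vector. -/
def n2 {α : Type*} [Fintype α] (v : α → ℝ) : ℝ := Real.sqrt (v ⬝ᵥ v)

lemma n2_nonneg {α : Type*} [Fintype α] (v : α → ℝ) : 0 ≤ n2 v := Real.sqrt_nonneg _

lemma dot_self_nonneg {α : Type*} [Fintype α] (v : α → ℝ) : 0 ≤ v ⬝ᵥ v :=
  Finset.sum_nonneg fun i _ => mul_self_nonneg _

lemma n2_sq {α : Type*} [Fintype α] (v : α → ℝ) : n2 v ^ 2 = v ⬝ᵥ v :=
  Real.sq_sqrt (dot_self_nonneg v)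

lemma n2_eq_norm {α : Type*} [Fintype α] (v : α → ℝ) :
    n2 v = ‖(WithLp.equiv 2 (α → ℝ)).symm v‖ := by
  rw [EuclideanSpace.norm_eq, n2]
  congr 1
  simp [dotProduct, sq_abs, pow_two]

lemma n2_sum_le {α β : Type*} [Fintype α] (s : Finset β) (v : β → α → ℝ) :
    n2 (∑ j ∈ s, v j) ≤ ∑ j ∈ s, n2 (v j) := by
  simp only [n2_eq_norm]
  rw [show ((WithLp.equiv 2 (α → ℝ)).symm (∑ j ∈ s, v j))
      = (WithLp.linearEquiv 2 ℝ (α → ℝ)).symm (∑ j ∈ s, v j) from rfl, map_sum]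
  exact (norm_sum_le _ _).trans_eq rfl

lemma n2_mulVec_le (M : Matrix κ ι ℝ) (x : ι → ℝ) : n2 (M *ᵥ x) ≤ spec M * n2 x := by
  simp only [n2_eq_norm, spec_eq_norm]
  exact M.l2_opNorm_mulVec ((WithLp.equiv 2 (ι → ℝ)).symm x)

lemma dot_mulVec_sq_le (M : Matrix κ ι ℝ) (x : ι → ℝ) :
    (M *ᵥ x) ⬝ᵥ (M *ᵥ x) ≤ spec M ^ 2 * (x ⬝ᵥ x) := by
  rw [← n2_sq, ← n2_sq]
  rw [← mul_pow]
  exact pow_le_pow_left₀ (n2_nonneg _) (n2_mulVec_le M x) 2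

lemma spec_le_bound {M : Matrix κ ι ℝ} {c : ℝ} (hc : 0 ≤ c)
    (h : ∀ x : ι → ℝ, n2 (M *ᵥ x) ≤ c * n2 x) : spec M ≤ c := by
  apply ContinuousLinearMap.opNorm_le_bound _ hc
  intro x
  have := h ((WithLp.equiv 2 (ι → ℝ)) x)
  simp only [n2_eq_norm, Equiv.symm_apply_apply] at this
  exact this

end SpecTools

section SortedTools
open Matrix
variable {ι : Type*} [Fintype ι]

lemma sortedDesc_lt {f : ι → ℝ} {i : ℕ} (h : i < Fintype.card ι) :
    sortedDesc f i = ((f ∘ (Fintype.equivFin ι).symm) ∘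
      Tuple.sort (f ∘ (Fintype.equivFin ι).symm)) ⟨Fintype.card ι - 1 - i, by omega⟩ := by
  simp only [sortedDesc, dif_pos h]

lemma sortedDesc_of_ge {f : ι → ℝ} {i : ℕ} (h : Fintype.card ι ≤ i) : sortedDesc f i = 0 := by
  simp only [sortedDesc, dif_neg (not_lt.mpr h)]

lemma sortedDesc_exists {f : ι → ℝ} {i : ℕ} (h : i < Fintype.card ι) :
    ∃ j, sortedDesc f i = f j := ⟨_, sortedDesc_lt h⟩

lemma exists_sortedDesc_eq (f : ι → ℝ) (j : ι) :
    ∃ i < Fintype.card ι, sortedDesc f i = f j := by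
  classical
  set g : Fin (Fintype.card ι) → ℝ := f ∘ (Fintype.equivFin ι).symm with hg
  set t : Fin (Fintype.card ι) := (Tuple.sort g).symm (Fintype.equivFin ι j) with ht
  have htlt : (t : ℕ) < Fintype.card ι := t.isLt
  refine ⟨Fintype.card ι - 1 - t, by omega, ?_⟩
  rw [sortedDesc_lt (by omega)]
  have hmk : (⟨Fintype.card ι - 1 - (Fintype.card ι - 1 - (t : ℕ)), by omega⟩
      : Fin (Fintype.card ι)) = t := by
    apply Fin.ext; simp only []; omega
  show g (Tuple.sort g ⟨_, _⟩) = f j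
  rw [hmk, ht, Equiv.apply_symm_apply]
  show f ((Fintype.equivFin ι).symm ((Fintype.equivFin ι) j)) = f j
  rw [Equiv.symm_apply_apply]

lemma sortedDesc_anti {f : ι → ℝ} (hf : ∀ j, 0 ≤ f j) {i i' : ℕ} (h : i ≤ i') :
    sortedDesc f i' ≤ sortedDesc f i := by
  rcases lt_or_ge i' (Fintype.card ι) with h1 | h1
  · have h2 : i < Fintype.card ι := lt_of_le_of_lt h h1
    rw [sortedDesc_lt h1, sortedDesc_lt h2]
    apply Tuple.monotone_sort
    show (⟨_, _⟩ : Fin _) ≤ ⟨_, _⟩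
    rw [Fin.mk_le_mk]
    omega
  · rw [sortedDesc_of_ge h1]
    rcases lt_or_ge i (Fintype.card ι) with h2 | h2
    · obtain ⟨j, hj⟩ := sortedDesc_exists h2; rw [hj]; exact hf j
    · rw [sortedDesc_of_ge h2]

lemma sortedDesc_nonneg {f : ι → ℝ} (hf : ∀ j, 0 ≤ f j) (i : ℕ) : 0 ≤ sortedDesc f i := by
  rcases lt_or_ge i (Fintype.card ι) with h | h
  · obtain ⟨j, hj⟩ := sortedDesc_exists h; rw [hj]; exact hf j
  · rw [sortedDesc_of_ge h]

lemma sortedDesc_pos_iff {f : ι → ℝ} (hf : ∀ j, 0 ≤ f j) {k : ℕ}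
    (hk : Fintype.card {j // f j ≠ 0} = k) (i : ℕ) : 0 < sortedDesc f i ↔ i < k := by
  classical
  set N := Fintype.card ι with hN
  set g : Fin N → ℝ := f ∘ (Fintype.equivFin ι).symm with hg
  set h : Fin N → ℝ := g ∘ Tuple.sort g with hh
  have hm : Monotone h := Tuple.monotone_sort g
  have hh0 : ∀ t, 0 ≤ h t := fun t => hf _
  have hcard : Fintype.card {t // h t ≠ 0} = k := by
    rw [← hk]
    exact Fintype.card_congr (Equiv.subtypeEquiv
      ((Tuple.sort g).trans (Fintype.equivFin ι).symm) (fun t => Iff.rfl))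
  have hkN : k ≤ N := by
    rw [← hcard]
    simpa using Fintype.card_subtype_le (fun t : Fin N => h t ≠ 0)
  have hfil : (Finset.univ.filter fun t : Fin N => h t ≠ 0).card = k := by
    rw [← hcard, Fintype.card_subtype]
  have key : ∀ t : Fin N, h t ≠ 0 ↔ N - k ≤ (t : ℕ) := by
    intro t
    have up : ∀ t' : Fin N, t ≤ t' → h t ≠ 0 → h t' ≠ 0 := fun t' htt h0 =>
      ne_of_gt (lt_of_lt_of_le (lt_of_le_of_ne (hh0 t) (Ne.symm h0)) (hm htt))
    constructor
    · intro h0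
      by_contra hc
      push_neg at hc
      have hsub : Finset.Ici t ⊆ Finset.univ.filter fun t' => h t' ≠ 0 := by
        intro t' ht'
        rw [Finset.mem_Ici] at ht'
        rw [Finset.mem_filter]
        exact ⟨Finset.mem_univ _, up t' ht' h0⟩
      have hcl := Finset.card_le_card hsub
      rw [hfil, Fin.card_Ici] at hcl
      have := t.isLt
      omega
    · intro hge
      by_contra h0
      have hsub : (Finset.univ.filter fun t' : Fin N => h t' ≠ 0) ⊆ Finset.Ioi t := by
        intro t' ht'
        rw [Finset.mem_filter] at ht'
        rw [Finset.mem_Ioi]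
        by_contra hle
        push_neg at hle
        exact ht'.2 (le_antisymm (h0 ▸ hm hle) (hh0 t'))
      have hcl := Finset.card_le_card hsub
      rw [hfil, Fin.card_Ioi] at hcl
      have := t.isLt
      omega
  rcases lt_or_ge i N with hi | hi
  · rw [sortedDesc_lt hi]
    have hkey := key ⟨N - 1 - i, by omega⟩
    show 0 < h _ ↔ _
    constructor
    · intro hpos
      have := hkey.mp (ne_of_gt hpos)
      simp only [] at this
      omega
    · intro hik
      have h0 := hkey.mpr (by simp only []; omega)
      exact lt_of_le_of_ne (hh0 _) (Ne.symm h0)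
  · rw [sortedDesc_of_ge hi]
    constructor
    · intro habs; exact absurd habs (lt_irrefl 0)
    · intro hik; omega

end SortedTools

section EigenTools
open Matrix
variable {ι κ : Type*} [Fintype ι] [DecidableEq ι] [Fintype κ]

lemma dot_mulVec_left (M : Matrix κ ι ℝ) (a : ι → ℝ) (b : κ → ℝ) :
    (M *ᵥ a) ⬝ᵥ b = a ⬝ᵥ (Mᵀ *ᵥ b) := by
  rw [dotProduct_comm, Matrix.dotProduct_mulVec, ← Matrix.mulVec_transpose,
    dotProduct_comm]

lemma eigs_nonneg (M : Matrix κ ι ℝ) (i : ι) :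
    0 ≤ (Matrix.isHermitian_conjTranspose_mul_self M).eigenvalues i := by
  have h : (Mᵀ * M).PosSemidef := by
    have := Matrix.posSemidef_conjTranspose_mul_self M
    rwa [Matrix.conjTranspose_eq_transpose_of_trivial] at this
  exact h.eigenvalues_nonneg i

lemma card_nonzero_eigs (M : Matrix κ ι ℝ) :
    Fintype.card {i // (Matrix.isHermitian_conjTranspose_mul_self M).eigenvalues i ≠ 0} = M.rank := by
  rw [← Matrix.rank_transpose_mul_self M]
  exact ((Matrix.isHermitian_conjTranspose_mul_self M).rank_eq_card_non_zero_eigs).symm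

lemma gram_eigenbasis (M : Matrix κ ι ℝ) :
    ∃ v : ι → ι → ℝ,
      (∀ i j, v i ⬝ᵥ v j = if i = j then 1 else 0) ∧
      (∀ i, (Mᵀ * M) *ᵥ v i = (Matrix.isHermitian_conjTranspose_mul_self M).eigenvalues i • v i) ∧
      (∀ x : ι → ℝ, x = ∑ i, (v i ⬝ᵥ x) • v i) := by
  set hG := Matrix.isHermitian_conjTranspose_mul_self M with hhG
  set b := hG.eigenvectorBasis with hb
  refine ⟨fun i => ⇑(b i), ?_, ?_, ?_⟩
  · intro i j
    have horth := b.orthonormal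
    rw [orthonormal_iff_ite] at horth
    have h2 := horth i j
    rw [PiLp.inner_apply] at h2
    simpa [RCLike.inner_apply, dotProduct, mul_comm] using h2
  · exact fun i => hG.mulVec_eigenvectorBasis i
  · intro x
    have h0 := b.sum_repr' ((WithLp.equiv 2 (ι → ℝ)).symm x)
    have h2 := congrArg (WithLp.linearEquiv 2 ℝ (ι → ℝ)) h0
    rw [map_sum] at h2
    simp only [_root_.map_smul] at h2
    have h3 : ∀ i, (inner ℝ (b i) ((WithLp.equiv 2 (ι → ℝ)).symm x) : ℝ) = (⇑(b i)) ⬝ᵥ x := by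
      intro i
      rw [PiLp.inner_apply]
      simp [RCLike.inner_apply, dotProduct, mul_comm]
    rw [show (WithLp.linearEquiv 2 ℝ (ι → ℝ)) ((WithLp.equiv 2 (ι → ℝ)).symm x) = x from rfl]
      at h2
    refine h2.symm.trans ?_
    refine Finset.sum_congr rfl fun i _ => ?_
    rw [h3 i]
    rfl


lemma sum_dotProduct' {β : Type*} (s : Finset β) (f : β → ι → ℝ) (x : ι → ℝ) :
    (∑ j ∈ s, f j) ⬝ᵥ x = ∑ j ∈ s, f j ⬝ᵥ x := by
  simp only [dotProduct, Finset.sum_apply, Finset.sum_mul]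
  exact Finset.sum_comm

lemma dotProduct_sum' {β : Type*} (s : Finset β) (x : ι → ℝ) (f : β → ι → ℝ) :
    x ⬝ᵥ (∑ j ∈ s, f j) = ∑ j ∈ s, x ⬝ᵥ f j := by
  simp only [dotProduct, Finset.sum_apply, Finset.mul_sum]
  exact Finset.sum_comm

lemma parseval_dot {v : ι → ι → ℝ}
    (hvo : ∀ i j, v i ⬝ᵥ v j = if i = j then 1 else 0)
    {x : ι → ℝ} (hx : x = ∑ i, (v i ⬝ᵥ x) • v i) :
    x ⬝ᵥ x = ∑ i, (v i ⬝ᵥ x) ^ 2 := by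
  nth_rewrite 1 [hx]
  rw [sum_dotProduct']
  refine Finset.sum_congr rfl fun i _ => ?_
  rw [smul_dotProduct, smul_eq_mul, sq]

lemma energy_dot (M : Matrix κ ι ℝ) {v : ι → ι → ℝ}
    (hve : ∀ i, (Mᵀ * M) *ᵥ v i =
      (Matrix.isHermitian_conjTranspose_mul_self M).eigenvalues i • v i)
    {x : ι → ℝ} (hx : x = ∑ i, (v i ⬝ᵥ x) • v i) :
    (M *ᵥ x) ⬝ᵥ (M *ᵥ x) =
      ∑ i, (Matrix.isHermitian_conjTranspose_mul_self M).eigenvalues i * (v i ⬝ᵥ x) ^ 2 := by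
  rw [dot_mulVec_left, Matrix.mulVec_mulVec]
  rw [show (Mᵀ * M) *ᵥ x = ∑ i, (v i ⬝ᵥ x) • ((Mᵀ * M) *ᵥ v i) by
    nth_rewrite 1 [hx]
    rw [← Matrix.mulVecLin_apply, map_sum]
    exact Finset.sum_congr rfl fun i _ => by
      rw [LinearMap.map_smul, Matrix.mulVecLin_apply]]
  rw [dotProduct_sum']
  refine Finset.sum_congr rfl fun i _ => ?_
  rw [hve i, dotProduct_smul, dotProduct_smul, dotProduct_comm]
  simp only [smul_eq_mul]
  ring
end EigenTools

section SvalTools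
open Matrix
variable {ι κ : Type*} [Fintype ι] [DecidableEq ι] [Fintype κ]

lemma sval_nonneg (M : Matrix κ ι ℝ) (i : ℕ) : 0 ≤ sval M i := Real.sqrt_nonneg _

lemma svalMin_nonneg (M : Matrix κ ι ℝ) : 0 ≤ svalMin M := Real.sqrt_nonneg _

lemma matRank_le_card (M : Matrix κ ι ℝ) : M.rank ≤ Fintype.card ι := by
  rw [← card_nonzero_eigs M]
  simpa using Fintype.card_subtype_le
    (fun i : ι => (Matrix.isHermitian_conjTranspose_mul_self M).eigenvalues i ≠ 0)

lemma spec_le_sval_one (M : Matrix κ ι ℝ) : spec M ≤ sval M 1 := by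
  set eigs := (Matrix.isHermitian_conjTranspose_mul_self M).eigenvalues with heigs
  have h1 : (sval M 1) ^ 2 = sortedDesc eigs 0 :=
    Real.sq_sqrt (sortedDesc_nonneg (eigs_nonneg M) 0)
  apply spec_le_bound (sval_nonneg M 1)
  intro x
  have h2 : (M *ᵥ x) ⬝ᵥ (M *ᵥ x) ≤ (sval M 1) ^ 2 * (x ⬝ᵥ x) := by
    obtain ⟨v, hvo, hve, hvx⟩ := gram_eigenbasis M
    rw [energy_dot M hve (hvx x), parseval_dot hvo (hvx x), h1, Finset.mul_sum]
    refine Finset.sum_le_sum fun i _ => ?_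
    have hle : eigs i ≤ sortedDesc eigs 0 := by
      obtain ⟨i', _, hi'⟩ := exists_sortedDesc_eq eigs i
      rw [← hi']
      exact sortedDesc_anti (eigs_nonneg M) (Nat.zero_le _)
    exact mul_le_mul_of_nonneg_right hle (sq_nonneg _)
  calc n2 (M *ᵥ x) = Real.sqrt ((M *ᵥ x) ⬝ᵥ (M *ᵥ x)) := rfl
    _ ≤ Real.sqrt ((sval M 1) ^ 2 * (x ⬝ᵥ x)) := Real.sqrt_le_sqrt h2
    _ = sval M 1 * n2 x := by
        rw [Real.sqrt_mul (sq_nonneg _), Real.sqrt_sq (sval_nonneg M 1)]; rfl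

lemma svalMin_of_rank_zero (M : Matrix κ ι ℝ) (h : M.rank = 0) : svalMin M = 0 := by
  set eigs := (Matrix.isHermitian_conjTranspose_mul_self M).eigenvalues with heigs
  have hall : ∀ i, eigs i = 0 := by
    have hc : Fintype.card {i // eigs i ≠ 0} = 0 := by rw [card_nonzero_eigs M, h]
    intro i
    by_contra hne
    exact (Fintype.card_eq_zero_iff.mp hc).elim ⟨i, hne⟩
  have : sortedDesc eigs (M.rank - 1) = 0 := by
    rcases lt_or_ge (M.rank - 1) (Fintype.card ι) with h2 | h2
    · obtain ⟨j, hj⟩ := sortedDesc_exists h2; rw [hj, hall j]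
    · exact sortedDesc_of_ge h2
  rw [svalMin, sval, this, Real.sqrt_zero]

lemma svalMin_key (M : Matrix κ ι ℝ) (h : 1 ≤ M.rank) :
    0 < svalMin M ∧ ∃ w : ι → ℝ, w ⬝ᵥ w = 1 ∧ (Mᵀ * M) *ᵥ w = (svalMin M ^ 2) • w := by
  have heigs : (Matrix.isHermitian_conjTranspose_mul_self M).eigenvalues =
    (Matrix.isHermitian_conjTranspose_mul_self M).eigenvalues := rfl
  let eigs := (Matrix.isHermitian_conjTranspose_mul_self M).eigenvalues
  let k := M.rank
  have hpos : 0 < sortedDesc eigs (k - 1) :=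
    (sortedDesc_pos_iff (eigs_nonneg M) (card_nonzero_eigs M) (k - 1)).mpr (by omega)
  have hsq : svalMin M ^ 2 = sortedDesc eigs (k - 1) :=
    Real.sq_sqrt (le_of_lt hpos)
  have hkN : k ≤ Fintype.card ι := matRank_le_card M
  obtain ⟨j, hj⟩ := sortedDesc_exists (f := eigs) (i := k - 1) (by omega)
  obtain ⟨v, hvo, hve, hvx⟩ := gram_eigenbasis M
  refine ⟨Real.sqrt_pos.mpr hpos, v j, by simpa using hvo j j, ?_⟩
  rw [hve j, hsq, hj]

lemma svalMin_kerperp (M : Matrix κ ι ℝ) (x : ι → ℝ)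
    (hx : ∀ y, M *ᵥ y = 0 → x ⬝ᵥ y = 0) :
    svalMin M ^ 2 * (x ⬝ᵥ x) ≤ (M *ᵥ x) ⬝ᵥ (M *ᵥ x) := by
  let eigs := (Matrix.isHermitian_conjTranspose_mul_self M).eigenvalues
  let k := M.rank
  have hs0 : 0 ≤ sortedDesc eigs (k - 1) := sortedDesc_nonneg (eigs_nonneg M) _
  have hsq : svalMin M ^ 2 = sortedDesc eigs (k - 1) := Real.sq_sqrt hs0
  obtain ⟨v, hvo, hve, hvx⟩ := gram_eigenbasis M
  rw [energy_dot M hve (hvx x), parseval_dot hvo (hvx x), hsq, Finset.mul_sum]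
  refine Finset.sum_le_sum fun i _ => ?_
  rcases eq_or_ne (eigs i) 0 with h0 | h0
  · have hker : M *ᵥ v i = 0 := by
      have : (M *ᵥ v i) ⬝ᵥ (M *ᵥ v i) = 0 := by
        rw [dot_mulVec_left, Matrix.mulVec_mulVec, hve i,
          show (Matrix.isHermitian_conjTranspose_mul_self M).eigenvalues i = 0 from h0, zero_smul,
          dotProduct_zero]
      rwa [dotProduct_self_eq_zero] at this
    have : v i ⬝ᵥ x = 0 := by rw [dotProduct_comm]; exact hx _ hker
    rw [this]
    simp
  · have hge : sortedDesc eigs (k - 1) ≤ eigs i := by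
      obtain ⟨i', hi'N, hi'⟩ := exists_sortedDesc_eq eigs i
      have hpos : 0 < sortedDesc eigs i' := by
        rw [hi']
        exact lt_of_le_of_ne (eigs_nonneg M i) (Ne.symm h0)
      have : i' < k := (sortedDesc_pos_iff (eigs_nonneg M) (card_nonzero_eigs M) i').mp hpos
      rw [← hi']
      exact sortedDesc_anti (eigs_nonneg M) (by omega)
    exact mul_le_mul_of_nonneg_right hge (sq_nonneg _)

lemma eigenvalues_congr {P Q : Matrix ι ι ℝ} (h : P = Q) (hP : P.IsHermitian)
    (hQ : Q.IsHermitian) : hP.eigenvalues = hQ.eigenvalues := by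
  subst h; rfl

lemma svalMin_gram_congr {κ' : Type*} [Fintype κ'] (X : Matrix κ ι ℝ) (Y : Matrix κ' ι ℝ)
    (h : Xᵀ * X = Yᵀ * Y) : svalMin X = svalMin Y := by
  have hrank : X.rank = Y.rank := by
    rw [← Matrix.rank_transpose_mul_self X, ← Matrix.rank_transpose_mul_self Y, h]
  have heig := eigenvalues_congr (show Xᴴ * X = Yᴴ * Y from h) (Matrix.isHermitian_conjTranspose_mul_self X)
    (Matrix.isHermitian_conjTranspose_mul_self Y)
  rw [svalMin, svalMin, sval, sval, hrank, heig]

end SvalTools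

section BlockTools
open Matrix
variable {α β σ τ : Type*} [Fintype α] [Fintype β] [DecidableEq β]
  [Fintype σ] [DecidableEq σ] [Fintype τ] [DecidableEq τ]

lemma dot_prod_split (u : (α × σ) → ℝ) :
    u ⬝ᵥ u = ∑ i : σ, (fun a => u (a, i)) ⬝ᵥ (fun a => u (a, i)) := by
  rw [dotProduct, Fintype.sum_prod_type]
  rw [Finset.sum_comm]
  rfl

lemma mulVec_block_apply (M : Matrix (α × σ) (β × τ) ℝ) (x : (β × τ) → ℝ) (a : α) (i : σ) :
    (M *ᵥ x) (a, i) =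
      ∑ j : τ, ((Matrix.of fun a b => M (a, i) (b, j)) *ᵥ (fun b => x (b, j))) a := by
  rw [mulVec, dotProduct, Fintype.sum_prod_type]
  rw [Finset.sum_comm]
  rfl

lemma spec_block_le (M : Matrix (α × σ) (β × τ) ℝ) (f : σ → τ → ℝ)
    (hf0 : ∀ i j, 0 ≤ f i j)
    (hf : ∀ i j, spec (Matrix.of fun a b => M (a, i) (b, j)) ≤ f i j) :
    spec M ≤ Real.sqrt (∑ i : σ, ∑ j : τ, f i j ^ 2) := by
  apply spec_le_bound (Real.sqrt_nonneg _)
  intro x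
  have hs : 0 ≤ ∑ i : σ, ∑ j : τ, f i j ^ 2 :=
    Finset.sum_nonneg fun _ _ => Finset.sum_nonneg fun _ _ => sq_nonneg _
  have hsq : (M *ᵥ x) ⬝ᵥ (M *ᵥ x) ≤ (∑ i : σ, ∑ j : τ, f i j ^ 2) * (x ⬝ᵥ x) := by
    rw [dot_prod_split (M *ᵥ x)]
    have hslice : ∀ i : σ, (fun a => (M *ᵥ x) (a, i)) =
        ∑ j : τ, ((Matrix.of fun a b => M (a, i) (b, j)) *ᵥ (fun b => x (b, j))) := by
      intro i; funext a
      rw [Finset.sum_apply]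
      exact mulVec_block_apply M x a i
    have hterm : ∀ i : σ, (fun a => (M *ᵥ x) (a, i)) ⬝ᵥ (fun a => (M *ᵥ x) (a, i)) ≤
        (∑ j : τ, f i j ^ 2) * (x ⬝ᵥ x) := by
      intro i
      have h1 : n2 (fun a => (M *ᵥ x) (a, i)) ≤
          ∑ j : τ, f i j * n2 (fun b => x (b, j)) := by
        rw [hslice i]
        refine (n2_sum_le Finset.univ _).trans ?_
        refine Finset.sum_le_sum fun j _ => ?_
        refine (n2_mulVec_le _ _).trans ?_
        exact mul_le_mul_of_nonneg_right (hf i j) (n2_nonneg _)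
      have h2 : (∑ j : τ, f i j * n2 (fun b => x (b, j))) ^ 2 ≤
          (∑ j : τ, f i j ^ 2) * (∑ j : τ, n2 (fun b => x (b, j)) ^ 2) :=
        Finset.sum_mul_sq_le_sq_mul_sq Finset.univ _ _
      rw [← n2_sq]
      calc n2 (fun a => (M *ᵥ x) (a, i)) ^ 2
          ≤ (∑ j : τ, f i j * n2 (fun b => x (b, j))) ^ 2 := by
            apply pow_le_pow_left₀ (n2_nonneg _) h1
        _ ≤ (∑ j : τ, f i j ^ 2) * (∑ j : τ, n2 (fun b => x (b, j)) ^ 2) := h2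
        _ = (∑ j : τ, f i j ^ 2) * (x ⬝ᵥ x) := by
            rw [dot_prod_split x]
            congr 1
            exact Finset.sum_congr rfl fun j _ => n2_sq _
    calc ∑ i : σ, (fun a => (M *ᵥ x) (a, i)) ⬝ᵥ (fun a => (M *ᵥ x) (a, i))
        ≤ ∑ i : σ, (∑ j : τ, f i j ^ 2) * (x ⬝ᵥ x) := Finset.sum_le_sum fun i _ => hterm i
      _ = (∑ i : σ, ∑ j : τ, f i j ^ 2) * (x ⬝ᵥ x) := by rw [Finset.sum_mul]
  calc n2 (M *ᵥ x) = Real.sqrt ((M *ᵥ x) ⬝ᵥ (M *ᵥ x)) := rfl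
    _ ≤ Real.sqrt ((∑ i : σ, ∑ j : τ, f i j ^ 2) * (x ⬝ᵥ x)) := Real.sqrt_le_sqrt hsq
    _ = Real.sqrt (∑ i : σ, ∑ j : τ, f i j ^ 2) * n2 x := Real.sqrt_mul hs _

lemma spec_blockDiagonal_le {d : ℕ} (X : Matrix α β ℝ) :
    spec (Matrix.blockDiagonal (fun _ : Fin d => X)) ≤ spec X := by
  apply spec_le_bound (spec_nonneg X)
  intro x
  have hsq : (Matrix.blockDiagonal (fun _ : Fin d => X) *ᵥ x) ⬝ᵥ
      (Matrix.blockDiagonal (fun _ : Fin d => X) *ᵥ x) ≤ spec X ^ 2 * (x ⬝ᵥ x) := by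
    rw [dot_prod_split (Matrix.blockDiagonal (fun _ : Fin d => X) *ᵥ x), dot_prod_split x,
      Finset.mul_sum]
    refine Finset.sum_le_sum fun j _ => ?_
    have hsl : (fun a => (Matrix.blockDiagonal (fun _ : Fin d => X) *ᵥ x) (a, j)) =
        X *ᵥ (fun b => x (b, j)) := by
      funext a
      rw [Matrix.mulVec, dotProduct, Fintype.sum_prod_type]
      rw [Matrix.mulVec, dotProduct]
      refine Finset.sum_congr rfl fun b _ => ?_
      have hbd : ∀ y : Fin d, Matrix.blockDiagonal (fun _ : Fin d => X) (a, j) (b, y)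
          = if j = y then X a b else 0 := fun y => rfl
      simp only [hbd, ite_mul, zero_mul, Finset.sum_ite_eq, Finset.mem_univ, if_true]
    rw [hsl]
    exact dot_mulVec_sq_le X _
  calc n2 (Matrix.blockDiagonal (fun _ : Fin d => X) *ᵥ x)
      = Real.sqrt ((Matrix.blockDiagonal (fun _ : Fin d => X) *ᵥ x) ⬝ᵥ
        (Matrix.blockDiagonal (fun _ : Fin d => X) *ᵥ x)) := rfl
    _ ≤ Real.sqrt (spec X ^ 2 * (x ⬝ᵥ x)) := Real.sqrt_le_sqrt hsq
    _ = spec X * n2 x := by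
        rw [Real.sqrt_mul (sq_nonneg _), Real.sqrt_sq (spec_nonneg X)]; rfl

end BlockTools

section OrthTools
open Matrix
variable {ι κ c : Type*} [Fintype ι] [DecidableEq ι] [Fintype κ] [DecidableEq κ]
  [Fintype c] [DecidableEq c]

lemma dot_le_n2_mul_n2 (u w : ι → ℝ) : u ⬝ᵥ w ≤ n2 u * n2 w := by
  have h := Finset.sum_mul_sq_le_sq_mul_sq Finset.univ u w
  have h1 : (u ⬝ᵥ w) ^ 2 ≤ (u ⬝ᵥ u) * (w ⬝ᵥ w) := by
    calc (u ⬝ᵥ w) ^ 2 ≤ (∑ i, u i ^ 2) * (∑ i, w i ^ 2) := h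
      _ = (u ⬝ᵥ u) * (w ⬝ᵥ w) := by
          simp only [dotProduct, ← sq]
  calc u ⬝ᵥ w ≤ |u ⬝ᵥ w| := le_abs_self _
    _ = Real.sqrt ((u ⬝ᵥ w) ^ 2) := (Real.sqrt_sq_eq_abs _).symm
    _ ≤ Real.sqrt ((u ⬝ᵥ u) * (w ⬝ᵥ w)) := Real.sqrt_le_sqrt h1
    _ = n2 u * n2 w := Real.sqrt_mul (dot_self_nonneg u) _

lemma dot_gram (W : Matrix κ ι ℝ) (h : Wᵀ * W = 1) (y : ι → ℝ) :
    (W *ᵥ y) ⬝ᵥ (W *ᵥ y) = y ⬝ᵥ y := by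
  rw [dot_mulVec_left, Matrix.mulVec_mulVec, h, Matrix.one_mulVec]

lemma spec_orth_le_one (W : Matrix κ ι ℝ) (h : Wᵀ * W = 1) : spec W ≤ 1 := by
  apply spec_le_bound zero_le_one
  intro x
  rw [show n2 (W *ᵥ x) = Real.sqrt ((W *ᵥ x) ⬝ᵥ (W *ᵥ x)) from rfl, dot_gram W h, one_mul]
  rfl

lemma spec_orthT_le_one (W : Matrix κ ι ℝ) (h : Wᵀ * W = 1) : spec Wᵀ ≤ 1 := by
  apply spec_le_bound zero_le_one
  intro x
  have h1 : (Wᵀ *ᵥ x) ⬝ᵥ (Wᵀ *ᵥ x) = x ⬝ᵥ (W *ᵥ (Wᵀ *ᵥ x)) := by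
    rw [dot_mulVec_left, Matrix.transpose_transpose]
  have h2 : x ⬝ᵥ (W *ᵥ (Wᵀ *ᵥ x)) ≤ n2 x * n2 (W *ᵥ (Wᵀ *ᵥ x)) := dot_le_n2_mul_n2 _ _
  have h3 : n2 (W *ᵥ (Wᵀ *ᵥ x)) = n2 (Wᵀ *ᵥ x) := by
    rw [show n2 (W *ᵥ (Wᵀ *ᵥ x)) = Real.sqrt ((W *ᵥ (Wᵀ *ᵥ x)) ⬝ᵥ (W *ᵥ (Wᵀ *ᵥ x))) from rfl,
      dot_gram W h]
    rfl
  have h4 : n2 (Wᵀ *ᵥ x) ^ 2 ≤ n2 x * n2 (Wᵀ *ᵥ x) := by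
    rw [n2_sq]
    calc (Wᵀ *ᵥ x) ⬝ᵥ (Wᵀ *ᵥ x) ≤ n2 x * n2 (W *ᵥ (Wᵀ *ᵥ x)) := h1 ▸ h2
      _ = n2 x * n2 (Wᵀ *ᵥ x) := by rw [h3]
  rw [one_mul]
  rcases eq_or_lt_of_le (n2_nonneg (Wᵀ *ᵥ x)) with h5 | h5
  · rw [← h5]; exact n2_nonneg x
  · nlinarith [h4, h5]

lemma col_factor (W : Matrix κ ι ℝ) (C : Matrix κ c ℝ) (h1 : Wᵀ * W = 1)
    (h2 : LinearMap.range C.mulVecLin = LinearMap.range W.mulVecLin) :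
    W * (Wᵀ * C) = C := by
  rw [← Matrix.mul_assoc]
  have key : ∀ j : c, ((W * Wᵀ) *ᵥ fun a => C a j) = fun a => C a j := by
    intro j
    have hmem : (fun a => C a j) ∈ LinearMap.range W.mulVecLin := by
      rw [← h2]
      refine ⟨Pi.single j 1, ?_⟩
      rw [Matrix.mulVecLin_apply, Matrix.mulVec_single]
      funext a; simp
    obtain ⟨y, hy⟩ := hmem
    rw [Matrix.mulVecLin_apply] at hy
    rw [← hy, Matrix.mulVec_mulVec, Matrix.mul_assoc, h1, Matrix.mul_one]
  ext a j
  have hkey := congrFun (key j) a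
  have h5 : ((W * Wᵀ) * C) a j = ((W * Wᵀ) *ᵥ fun k => C k j) a := by
    rw [Matrix.mul_apply, Matrix.mulVec, dotProduct]
  rw [h5, hkey]

lemma mulVec_eq_zero_of_rank_zero (M : Matrix κ ι ℝ) (h : M.rank = 0) (x : ι → ℝ) :
    M *ᵥ x = 0 := by
  have h2 : LinearMap.range M.mulVecLin = ⊥ := Submodule.finrank_eq_zero.mp h
  have h3 : M.mulVecLin x ∈ LinearMap.range M.mulVecLin := ⟨x, rfl⟩
  rw [h2, Submodule.mem_bot] at h3
  rw [← Matrix.mulVecLin_apply]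
  exact h3

end OrthTools

section MiscTools
open Matrix

lemma n2_add_le {α : Type*} [Fintype α] (u v : α → ℝ) : n2 (u + v) ≤ n2 u + n2 v := by
  simp only [n2_eq_norm]
  rw [show ((WithLp.equiv 2 (α → ℝ)).symm (u + v))
      = (WithLp.linearEquiv 2 ℝ (α → ℝ)).symm u + (WithLp.linearEquiv 2 ℝ (α → ℝ)).symm v
      from rfl]
  exact (norm_add_le _ _).trans_eq rfl

lemma geom_aux {q : ℝ} (h0 : 0 ≤ q) (h1 : q < 1) (d : ℕ) :
    ∑ i : Fin d, q ^ ((i : ℕ) - 1) ≤ 2 / (1 - q) := by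
  have h1q : 0 < 1 - q := by linarith
  have hgeom : ∀ e : ℕ, ∑ i ∈ Finset.range e, q ^ i ≤ 1 / (1 - q) := by
    intro e
    rw [geom_sum_eq (by intro h; rw [h] at h1; exact lt_irrefl 1 h1) e]
    rw [show (q ^ e - 1) / (q - 1) = (1 - q ^ e) / (1 - q) by
      rw [← neg_div_neg_eq]; ring_nf]
    have hnum : 1 - q ^ e ≤ 1 := by
      have : 0 ≤ q ^ e := pow_nonneg h0 e
      linarith
    gcongr
  rcases Nat.eq_zero_or_pos d with hd | hd
  · subst hd
    simp only [Finset.univ_eq_empty, Finset.sum_empty]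
    positivity
  · rw [Fin.sum_univ_eq_sum_range (fun i => q ^ (i - 1))]
    obtain ⟨e, rfl⟩ : ∃ e, d = e + 1 := ⟨d - 1, by omega⟩
    rw [Finset.sum_range_succ']
    simp only [Nat.add_sub_cancel, Nat.zero_sub, pow_zero]
    have := hgeom e
    have hone : (1 : ℝ) ≤ 1 / (1 - q) := by
      rw [le_div_iff₀ h1q]; linarith
    calc (∑ i ∈ Finset.range e, q ^ i) + 1 ≤ 1 / (1 - q) + 1 / (1 - q) := by linarith
      _ = 2 / (1 - q) := by ring

end MiscTools


set_option maxHeartbeats 1000000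

/-- Lemma D.3: if the column space estimate `Φ̂_C` is
`φ_𝓗(1−ρ_A²)/(8ψ_A²ψ_Bψ_C)`-accurate, then the minimum (nonzero) singular value of the
projected Hankel matrix `diag(Φ̂_Cᵀ,…,Φ̂_Cᵀ)·H_d⁻(M)` is at least `φ_𝓗/2`. -/
theorem projected_hankel_sigma_min
    {r n m d : ℕ} (hd : 0 < d)
    (A : Matrix (Fin r) (Fin r) ℝ) (B : Matrix (Fin r) (Fin m) ℝ)
    (C : Matrix (Fin n) (Fin r) ℝ)
    -- minimality
    (hctrb : (ctrbMat A B).rank = r) (hobsv : (obsvMat A C).rank = r)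
    -- Assumption 1
    (ψA ρA : ℝ) (hψA : 1 ≤ ψA) (hρA0 : 0 < ρA) (hρA1 : ρA < 1)
    (hAssump : ∀ i : ℕ, spec (A ^ i) ≤ ψA * ρA ^ (i - 1))
    -- constants
    (ψB ψC φH : ℝ)
    (hψB : ψB = max 1 (sval B 1)) (hψC : ψC = max 1 (sval C 1))
    (hφH : φH = svalMin (hankelMinus A B C d))
    -- `Φ̂_C` orthonormal with orthonormal complement `Φ̂_C^⊥`
    (s : ℕ) (Φhat : Matrix (Fin n) (Fin s) ℝ) (Φperp : Matrix (Fin n) (Fin (n - s)) ℝ)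
    (hΦ1 : Φhatᵀ * Φhat = 1) (hΦ2 : Φperpᵀ * Φperp = 1) (hΦ3 : Φhatᵀ * Φperp = 0)
    (hΦ4 : Φhat * Φhatᵀ + Φperp * Φperpᵀ = 1)
    -- `Φ_C`: an orthonormal basis of the column space of `C`
    (PhiC : Matrix (Fin n) (Fin C.rank) ℝ)
    (hPhiC1 : PhiCᵀ * PhiC = 1)
    (hPhiC2 : LinearMap.range PhiC.mulVecLin = LinearMap.range C.mulVecLin)
    -- accuracy of the column space estimate
    (ΔΦ : ℝ) (hΔ1 : spec (Φperpᵀ * PhiC) ≤ ΔΦ)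
    (hΔ2 : ΔΦ ≤ φH * (1 - ρA ^ 2) / (8 * ψA ^ 2 * ψB * ψC)) :
    φH / 2 ≤
      svalMin (Matrix.blockDiagonal (fun _ : Fin d => Φhatᵀ) * hankelMinus A B C d) := by
  classical
  have hψB1 : (1:ℝ) ≤ ψB := by rw [hψB]; exact le_max_left _ _
  have hψC1 : (1:ℝ) ≤ ψC := by rw [hψC]; exact le_max_left _ _
  have hψA0 : (0:ℝ) < ψA := lt_of_lt_of_le one_pos hψA
  have hspecB : spec B ≤ ψB := by
    rw [hψB]; exact le_trans (spec_le_sval_one B) (le_max_right _ _)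
  have hspecC : spec C ≤ ψC := by
    rw [hψC]; exact le_trans (spec_le_sval_one C) (le_max_right _ _)
  have hq0 : (0:ℝ) ≤ ρA ^ 2 := sq_nonneg _
  have hq1 : ρA ^ 2 < 1 := by nlinarith
  have h1q : (0:ℝ) < 1 - ρA ^ 2 := by linarith
  have hΔ0 : 0 ≤ ΔΦ := le_trans (spec_nonneg _) hΔ1
  have hφH0 : 0 ≤ φH := by rw [hφH]; exact svalMin_nonneg _
  set H := hankelMinus A B C d with hHdef
  -- blockwise spectral bound
  have hblock : ∀ i j : Fin d, spec (Matrix.of fun a b => H (a,i) (b,j))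
      ≤ (ψC * ψA * ψB) * (ρA ^ ((i:ℕ) + (j:ℕ) - 1)) := by
    intro i j
    have hbe : (Matrix.of fun a b => H (a,i) (b,j)) = C * A ^ ((i:ℕ)+(j:ℕ)) * B := by
      ext a b; rfl
    rw [hbe]
    have hA' := hAssump ((i:ℕ)+(j:ℕ))
    calc spec (C * A ^ ((i:ℕ)+(j:ℕ)) * B)
        ≤ spec (C * A ^ ((i:ℕ)+(j:ℕ))) * spec B := spec_mul_le _ _
      _ ≤ (spec C * spec (A ^ ((i:ℕ)+(j:ℕ)))) * spec B :=
          mul_le_mul_of_nonneg_right (spec_mul_le _ _) (spec_nonneg _)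
      _ ≤ (ψC * (ψA * ρA ^ ((i:ℕ)+(j:ℕ)-1))) * ψB := by
          apply mul_le_mul ?_ hspecB (spec_nonneg _) (by positivity)
          exact mul_le_mul hspecC hA' (spec_nonneg _) (by linarith)
      _ = (ψC * ψA * ψB) * (ρA ^ ((i:ℕ)+(j:ℕ)-1)) := by ring
  -- spectral norm bound for the Hankel matrix
  have hHspec : spec H ≤ (ψC * ψA * ψB) * (2 / (1 - ρA ^ 2)) := by
    have hb := spec_block_le H (fun i j => (ψC*ψA*ψB) * ρA ^ ((i:ℕ)+(j:ℕ)-1))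
      (fun i j => by positivity) hblock
    refine hb.trans ?_
    have hgs : ∑ i : Fin d, (ρA^2) ^ ((i:ℕ) - 1) ≤ 2 / (1 - ρA^2) := geom_aux hq0 hq1 d
    have hgs0 : 0 ≤ ∑ i : Fin d, (ρA^2) ^ ((i:ℕ) - 1) :=
      Finset.sum_nonneg fun i _ => pow_nonneg hq0 _
    have hsum : (∑ i : Fin d, ∑ j : Fin d, ((ψC*ψA*ψB) * ρA ^ ((i:ℕ)+(j:ℕ)-1))^2)
        ≤ ((ψC*ψA*ψB) * (2 / (1-ρA^2)))^2 := by
      have hterm : ∀ i j : Fin d, ((ψC*ψA*ψB) * ρA ^ ((i:ℕ)+(j:ℕ)-1))^2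
          ≤ (ψC*ψA*ψB)^2 * ((ρA^2)^((i:ℕ)-1) * (ρA^2)^((j:ℕ)-1)) := by
        intro i j
        have he : (i:ℕ) - 1 + ((j:ℕ) - 1) ≤ (i:ℕ) + (j:ℕ) - 1 := by omega
        have hpw : (ρA^2) ^ ((i:ℕ)+(j:ℕ)-1) ≤ (ρA^2)^((i:ℕ)-1) * (ρA^2)^((j:ℕ)-1) := by
          rw [← pow_add]
          exact pow_le_pow_of_le_one hq0 (le_of_lt hq1) he
        calc ((ψC*ψA*ψB) * ρA ^ ((i:ℕ)+(j:ℕ)-1))^2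
            = (ψC*ψA*ψB)^2 * (ρA^2) ^ ((i:ℕ)+(j:ℕ)-1) := by
              rw [mul_pow, ← pow_mul, Nat.mul_comm, pow_mul]
          _ ≤ _ := mul_le_mul_of_nonneg_left hpw (sq_nonneg _)
      calc ∑ i : Fin d, ∑ j : Fin d, ((ψC*ψA*ψB) * ρA ^ ((i:ℕ)+(j:ℕ)-1))^2
          ≤ ∑ i : Fin d, ∑ j : Fin d,
              (ψC*ψA*ψB)^2 * ((ρA^2)^((i:ℕ)-1) * (ρA^2)^((j:ℕ)-1)) :=
            Finset.sum_le_sum fun i _ => Finset.sum_le_sum fun j _ => hterm i j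
        _ = (ψC*ψA*ψB)^2 *
            ((∑ i : Fin d, (ρA^2)^((i:ℕ)-1)) * (∑ j : Fin d, (ρA^2)^((j:ℕ)-1))) := by
            rw [Finset.sum_mul_sum]
            rw [Finset.mul_sum]
            refine Finset.sum_congr rfl fun i _ => ?_
            rw [Finset.mul_sum]
        _ ≤ (ψC*ψA*ψB)^2 * ((2/(1-ρA^2)) * (2/(1-ρA^2))) := by
            apply mul_le_mul_of_nonneg_left ?_ (sq_nonneg _)
            exact mul_le_mul hgs hgs hgs0 (by positivity)
        _ = ((ψC*ψA*ψB) * (2 / (1-ρA^2)))^2 := by ring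
    calc Real.sqrt (∑ i : Fin d, ∑ j : Fin d, ((ψC*ψA*ψB) * ρA ^ ((i:ℕ)+(j:ℕ)-1))^2)
        ≤ Real.sqrt (((ψC*ψA*ψB) * (2/(1-ρA^2)))^2) := Real.sqrt_le_sqrt hsum
      _ = (ψC*ψA*ψB) * (2/(1-ρA^2)) := Real.sqrt_sq (by positivity)
  -- Hankel factorization through C
  set Hh : Matrix (Fin r × Fin d) (Fin m × Fin d) ℝ :=
    Matrix.of (fun p q => (A ^ ((p.2:ℕ) + (q.2:ℕ)) * B) p.1 q.1) with hHh
  have hHf : H = Matrix.blockDiagonal (fun _ : Fin d => C) * Hh := by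
    ext ⟨a, i⟩ ⟨b, j⟩
    rw [show H (a,i) (b,j) = (C * A ^ ((i:ℕ)+(j:ℕ)) * B) a b from rfl]
    rw [Matrix.mul_assoc, Matrix.mul_apply, Matrix.mul_apply, Fintype.sum_prod_type]
    refine Finset.sum_congr rfl fun c _ => ?_
    have hbd : ∀ i' : Fin d, Matrix.blockDiagonal (fun _ : Fin d => C) (a,i) (c,i')
        = if i = i' then C a c else 0 := fun i' => rfl
    have hhh : ∀ i' : Fin d, Hh (c,i') (b,j) = (A ^ ((i':ℕ)+(j:ℕ)) * B) c b := fun i' => rfl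
    simp only [hbd, hhh, ite_mul, zero_mul, Finset.sum_ite_eq, Finset.mem_univ, if_true]
  -- Z and E
  set Z := Matrix.blockDiagonal (fun _ : Fin d => Φhat * Φhatᵀ) * H with hZdef
  set E := Matrix.blockDiagonal (fun _ : Fin d => Φperp * Φperpᵀ) * H with hEdef
  have hZE : Z + E = H := by
    rw [hZdef, hEdef, ← Matrix.add_mul, ← Matrix.blockDiagonal_add]
    rw [show ((fun _ : Fin d => Φhat * Φhatᵀ) + fun _ : Fin d => Φperp * Φperpᵀ)
        = (1 : Fin d → Matrix (Fin n) (Fin n) ℝ) from funext fun _ => hΦ4]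
    rw [Matrix.blockDiagonal_one, Matrix.one_mul]
  -- Gram equality
  have hPP : (Φhat * Φhatᵀ) * (Φhat * Φhatᵀ) = Φhat * Φhatᵀ := by
    rw [Matrix.mul_assoc, ← Matrix.mul_assoc Φhatᵀ, hΦ1, Matrix.one_mul]
  have hmid1 : Matrix.blockDiagonal (fun _ : Fin d => Φhat) *
      Matrix.blockDiagonal (fun _ : Fin d => Φhatᵀ)
      = Matrix.blockDiagonal (fun _ : Fin d => Φhat * Φhatᵀ) :=
    (Matrix.blockDiagonal_mul _ _).symm
  have hmid2 : Matrix.blockDiagonal (fun _ : Fin d => Φhat * Φhatᵀ) *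
      Matrix.blockDiagonal (fun _ : Fin d => Φhat * Φhatᵀ)
      = Matrix.blockDiagonal (fun _ : Fin d => Φhat * Φhatᵀ) := by
    rw [← Matrix.blockDiagonal_mul]
    exact congrArg _ (funext fun _ => hPP)
  have hgram : (Matrix.blockDiagonal (fun _ : Fin d => Φhatᵀ) * H)ᵀ *
      (Matrix.blockDiagonal (fun _ : Fin d => Φhatᵀ) * H) = Zᵀ * Z := by
    rw [hZdef]
    rw [Matrix.transpose_mul, Matrix.transpose_mul, Matrix.blockDiagonal_transpose,
      Matrix.blockDiagonal_transpose]
    simp only [Matrix.transpose_transpose, Matrix.transpose_mul]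
    rw [Matrix.mul_assoc, Matrix.mul_assoc]
    rw [← Matrix.mul_assoc (Matrix.blockDiagonal fun _ : Fin d => Φhat), hmid1]
    rw [← Matrix.mul_assoc (Matrix.blockDiagonal fun _ : Fin d => Φhat * Φhatᵀ), hmid2]
  -- E factorization and norm bound
  have hCfac : PhiC * (PhiCᵀ * C) = C := col_factor PhiC C hPhiC1 hPhiC2.symm
  have hmat : (Φperp * Φperpᵀ) * C = Φperp * ((Φperpᵀ * PhiC) * (PhiCᵀ * C)) := by
    rw [Matrix.mul_assoc Φperpᵀ PhiC (PhiCᵀ * C), hCfac, Matrix.mul_assoc]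
  have bdma : ∀ {a b c : Type} [Fintype a] [Fintype b] [Fintype c] [DecidableEq a]
      [DecidableEq b] [DecidableEq c] {e : Type} [Fintype e] [DecidableEq e]
      (X : Matrix a b ℝ) (Y : Matrix b c ℝ) (W : Matrix (c × Fin d) e ℝ),
      Matrix.blockDiagonal (fun _ : Fin d => X) *
        (Matrix.blockDiagonal (fun _ : Fin d => Y) * W)
      = Matrix.blockDiagonal (fun _ : Fin d => X * Y) * W := by
    intro a b c _ _ _ _ _ _ e _ _ X Y W
    rw [← Matrix.mul_assoc, Matrix.blockDiagonal_mul]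
  have hEfact : E = Matrix.blockDiagonal (fun _ : Fin d => Φperp) *
      (Matrix.blockDiagonal (fun _ : Fin d => Φperpᵀ * PhiC) *
        (Matrix.blockDiagonal (fun _ : Fin d => PhiCᵀ) * H)) := by
    rw [hEdef, hHf, bdma, bdma, bdma, bdma]
    exact congrArg (· * Hh) (congrArg _ (funext fun _ => by
      rw [Matrix.mul_assoc (Φperp * (Φperpᵀ * PhiC)), Matrix.mul_assoc Φperp (Φperpᵀ * PhiC),
        ← hmat]))
  have hE1 : spec E ≤ ΔΦ * spec H := by
    rw [hEfact]
    have b1 : spec (Matrix.blockDiagonal (fun _ : Fin d => Φperp)) ≤ 1 :=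
      le_trans (spec_blockDiagonal_le Φperp) (spec_orth_le_one Φperp hΦ2)
    have b2 : spec (Matrix.blockDiagonal (fun _ : Fin d => Φperpᵀ * PhiC)) ≤ ΔΦ :=
      le_trans (spec_blockDiagonal_le _) hΔ1
    have b3 : spec (Matrix.blockDiagonal (fun _ : Fin d => PhiCᵀ)) ≤ 1 :=
      le_trans (spec_blockDiagonal_le _) (spec_orthT_le_one PhiC hPhiC1)
    calc spec (Matrix.blockDiagonal (fun _ : Fin d => Φperp) *
        (Matrix.blockDiagonal (fun _ : Fin d => Φperpᵀ * PhiC) *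
          (Matrix.blockDiagonal (fun _ : Fin d => PhiCᵀ) * H)))
        ≤ spec (Matrix.blockDiagonal (fun _ : Fin d => Φperp)) *
          spec (Matrix.blockDiagonal (fun _ : Fin d => Φperpᵀ * PhiC) *
            (Matrix.blockDiagonal (fun _ : Fin d => PhiCᵀ) * H)) := spec_mul_le _ _
      _ ≤ 1 * (ΔΦ * (1 * spec H)) := by
          apply mul_le_mul b1 ?_ (spec_nonneg _) zero_le_one
          refine (spec_mul_le _ _).trans ?_
          apply mul_le_mul b2 ?_ (spec_nonneg _) hΔ0
          refine (spec_mul_le _ _).trans ?_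
          exact mul_le_mul_of_nonneg_right b3 (spec_nonneg _)
      _ = ΔΦ * spec H := by ring
  have hε : spec E ≤ φH / 4 := by
    have h2 : spec E ≤ ΔΦ * ((ψC*ψA*ψB) * (2/(1-ρA^2))) :=
      hE1.trans (mul_le_mul_of_nonneg_left hHspec hΔ0)
    refine h2.trans ?_
    have h3 : ΔΦ * ((ψC*ψA*ψB) * (2/(1-ρA^2)))
        ≤ (φH * (1 - ρA^2) / (8*ψA^2*ψB*ψC)) * ((ψC*ψA*ψB) * (2/(1-ρA^2))) :=
      mul_le_mul_of_nonneg_right hΔ2 (by positivity)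
    refine h3.trans ?_
    have heq : (φH * (1 - ρA^2) / (8*ψA^2*ψB*ψC)) * ((ψC*ψA*ψB) * (2/(1-ρA^2)))
        = φH / (4 * ψA) := by
      field_simp
      ring
    rw [heq, div_le_div_iff₀ (by positivity) (by norm_num)]
    nlinarith [hφH0, hψA]
  -- reduce to Z
  rw [svalMin_gram_congr (Matrix.blockDiagonal (fun _ : Fin d => Φhatᵀ) * H) Z hgram]
  rcases Nat.eq_zero_or_pos H.rank with hr0 | hr1
  · have hz : φH = 0 := by rw [hφH]; exact svalMin_of_rank_zero _ hr0
    rw [hz]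
    simpa using svalMin_nonneg Z
  · obtain ⟨hφpos', v, hv1, hv2⟩ := svalMin_key H hr1
    have hφpos : 0 < φH := by rw [hφH]; exact hφpos'
    have hφHs : svalMin H = φH := hφH.symm
    have hperp : ∀ y, H *ᵥ y = 0 → v ⬝ᵥ y = 0 := by
      intro y hy
      have h1 : (Hᵀ * H) *ᵥ y = 0 := by
        rw [← Matrix.mulVec_mulVec, hy, Matrix.mulVec_zero]
      have h2 : (svalMin H ^ 2) * (v ⬝ᵥ y) = 0 := by
        have h0 : ((svalMin H ^ 2) • v) ⬝ᵥ y = 0 := by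
          rw [← hv2, dot_mulVec_left, Matrix.transpose_mul, Matrix.transpose_transpose, h1,
            dotProduct_zero]
        rwa [smul_dotProduct, smul_eq_mul] at h0
      exact (mul_eq_zero.mp h2).resolve_left (pow_ne_zero 2 (ne_of_gt hφpos'))
    rcases Nat.eq_zero_or_pos Z.rank with hz0 | hz1
    · exfalso
      have hZv : Z *ᵥ v = 0 := mulVec_eq_zero_of_rank_zero Z hz0 v
      have hlow := svalMin_kerperp H v hperp
      rw [hv1, mul_one, hφHs] at hlow
      have hHveq : H *ᵥ v = E *ᵥ v := by
        rw [← hZE, Matrix.add_mulVec, hZv, zero_add]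
      have hup := dot_mulVec_sq_le E v
      rw [hv1, mul_one] at hup
      rw [hHveq] at hlow
      have hse : spec E ^ 2 ≤ (φH/4)^2 := pow_le_pow_left₀ (spec_nonneg E) hε 2
      nlinarith
    · obtain ⟨hZpos, w, hw1, hw2⟩ := svalMin_key Z hz1
      have hperpw : ∀ y, H *ᵥ y = 0 → w ⬝ᵥ y = 0 := by
        intro y hy
        have hZy : Z *ᵥ y = 0 := by
          rw [hZdef, ← Matrix.mulVec_mulVec, hy, Matrix.mulVec_zero]
        have h1 : (Zᵀ * Z) *ᵥ y = 0 := by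
          rw [← Matrix.mulVec_mulVec, hZy, Matrix.mulVec_zero]
        have h2 : (svalMin Z ^ 2) * (w ⬝ᵥ y) = 0 := by
          have h0 : ((svalMin Z ^ 2) • w) ⬝ᵥ y = 0 := by
            rw [← hw2, dot_mulVec_left, Matrix.transpose_mul, Matrix.transpose_transpose, h1,
              dotProduct_zero]
          rwa [smul_dotProduct, smul_eq_mul] at h0
        exact (mul_eq_zero.mp h2).resolve_left (pow_ne_zero 2 (ne_of_gt hZpos))
      have hn2w : n2 w = 1 := by rw [n2, hw1, Real.sqrt_one]
      have hHw : φH ≤ n2 (H *ᵥ w) := by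
        have h3 := svalMin_kerperp H w hperpw
        rw [hw1, mul_one, hφHs] at h3
        rw [show φH = Real.sqrt (φH ^ 2) from (Real.sqrt_sq hφH0).symm]
        exact Real.sqrt_le_sqrt h3
      have hZw : n2 (Z *ᵥ w) = svalMin Z := by
        have h4 : (Z *ᵥ w) ⬝ᵥ (Z *ᵥ w) = svalMin Z ^ 2 := by
          rw [dot_mulVec_left, Matrix.mulVec_mulVec, hw2, dotProduct_smul,
            smul_eq_mul, hw1, mul_one]
        rw [show n2 (Z *ᵥ w) = Real.sqrt ((Z *ᵥ w) ⬝ᵥ (Z *ᵥ w)) from rfl, h4]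
        exact Real.sqrt_sq (svalMin_nonneg Z)
      have hEw : n2 (E *ᵥ w) ≤ φH / 4 := by
        refine (n2_mulVec_le E w).trans ?_
        rw [hn2w, mul_one]
        exact hε
      have htri : n2 (H *ᵥ w) ≤ n2 (Z *ᵥ w) + n2 (E *ᵥ w) := by
        rw [show H *ᵥ w = Z *ᵥ w + E *ᵥ w from by rw [← hZE, Matrix.add_mulVec]]
        exact n2_add_le _ _
      linarith
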